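/- arXiv:math-ph/0011044 — 2 statements merged into one kernel-verified Lean document; each statement's English description precedes it below -/
import Mathlib

section
/- Let M be a von Neumann algebra acting on a complex Hilbert space H and let Ω ∈ H be a vector that is cyclic and separating for M. Then the Tomita operator S₀, defined on the dense domain MΩ = {AΩ : A ∈ M} by S₀(AΩ) = A*Ω for A ∈ M, is a well-defined conjugate-linear operator and is closable; concretely, whenever (Aₙ) is a sequence in M such that AₙΩ → 0 in H and the sequence (Aₙ*Ω) converges to some η ∈ H, then η = 0 (equivalently, the norm closure in H × H of the set {(AΩ, A*Ω) : A ∈ M} is the graph of a conjugate-linear operator). -/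
/-!
Closability comes from the commutant. For `B ∈ M'`,
`⟪BΩ, Aₙ*Ω⟫ = ⟪B AₙΩ, Ω⟫ → 0`, so the limit `η` of `Aₙ*Ω` is orthogonal to `M'Ω`.
A vector separating for `M` is cyclic for `M'`: the projection onto `(M'Ω)ᗮ` has an
`M'`-invariant range, so it lies in `M'' = M`, and it kills `Ω`, so it vanishes.
Hence `η = 0`.
-/

open scoped ComplexConjugate InnerProductSpace
open ContinuousLinearMap Filter Module.End

namespace VonNeumannAlgebra

variable {H : Type*} [NormedAddCommGroup H] [InnerProductSpace ℂ H] [CompleteSpace H]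

noncomputable def orbit (S : VonNeumannAlgebra H) (Ω : H) : Submodule ℂ H :=
  (Subalgebra.toSubmodule S.toSubalgebra).map (ContinuousLinearMap.apply ℂ H Ω).toLinearMap

theorem mem_orbit {S : VonNeumannAlgebra H} {Ω x : H} :
    x ∈ S.orbit Ω ↔ ∃ A ∈ S, A Ω = x :=
  Iff.rfl

theorem apply_mem_orbit {S : VonNeumannAlgebra H} {A : H →L[ℂ] H} (hA : A ∈ S) (Ω : H) :
    A Ω ∈ S.orbit Ω :=
  ⟨A, hA, rfl⟩

theorem orbit_mem_invtSubmodule {S : VonNeumannAlgebra H} {T : H →L[ℂ] H} (hT : T ∈ S)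
    (Ω : H) : S.orbit Ω ∈ invtSubmodule T.toLinearMap := by
  rw [mem_invtSubmodule_iff_forall_mem_of_mem]
  rintro _ ⟨A, hA, rfl⟩
  exact apply_mem_orbit (mul_mem hT hA) Ω

theorem orthogonal_orbit_mem_invtSubmodule {S : VonNeumannAlgebra H} {T : H →L[ℂ] H}
    (hT : T ∈ S) (Ω : H) : (S.orbit Ω)ᗮ ∈ invtSubmodule T.toLinearMap := by
  refine orthogonal_mem_invtSubmodule ?_
  rw [← star_eq_adjoint]
  exact orbit_mem_invtSubmodule (star_mem hT) Ω

theorem orthogonal_orbit_commutant_eq_bot {M : VonNeumannAlgebra H} {Ω : H}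
    (hsep : ∀ A : H →L[ℂ] H, A ∈ M → A Ω = 0 → A = 0) :
    (M.commutant.orbit Ω)ᗮ = ⊥ := by
  set P := (M.commutant.orbit Ω)ᗮ.starProjection
  have hPM : P ∈ M := by
    rw [IsStarProjection.mem_iff isStarProjection_starProjection, Submodule.range_starProjection]
    exact fun T hT ↦ orthogonal_orbit_mem_invtSubmodule hT Ω
  have hPΩ : P Ω = 0 :=
    Submodule.starProjection_orthogonal_apply_eq_zero (apply_mem_orbit (one_mem _) Ω)
  have hP : P = 0 := hsep P hPM hPΩ
  refine (Submodule.eq_bot_iff _).mpr fun x hx ↦ ?_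
  calc x = P x := (Submodule.starProjection_eq_self_iff.mpr hx).symm
    _ = 0 := by rw [hP, zero_apply]

theorem mem_orthogonal_orbit_commutant_of_tendsto {M : VonNeumannAlgebra H} {Ω η : H}
    {A : ℕ → H →L[ℂ] H} (hA : ∀ n, A n ∈ M)
    (h0 : Tendsto (fun n ↦ A n Ω) atTop (nhds 0))
    (hη : Tendsto (fun n ↦ star (A n) Ω) atTop (nhds η)) :
    η ∈ (M.commutant.orbit Ω)ᗮ := by
  intro u hu
  obtain ⟨B, hB, rfl⟩ := mem_orbit.mp hu
  have hcomm : ∀ n, ⟪B Ω, star (A n) Ω⟫_ℂ = ⟪B (A n Ω), Ω⟫_ℂ := fun n ↦ by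
    rw [star_eq_adjoint, adjoint_inner_right]
    exact congr(⟪$(mem_commutant_iff.mp hB _ (hA n)) Ω, Ω⟫_ℂ)
  have hlim : Tendsto (fun n ↦ ⟪B (A n Ω), Ω⟫_ℂ) atTop (nhds ⟪B 0, Ω⟫_ℂ) :=
    ((B.continuous.tendsto 0).comp h0).inner tendsto_const_nhds
  rw [map_zero, inner_zero_left] at hlim
  exact tendsto_nhds_unique (tendsto_const_nhds.inner hη) (by simpa only [hcomm] using hlim)

theorem star_apply_eq_of_apply_eq {M : VonNeumannAlgebra H} {Ω : H}
    (hsep : ∀ A : H →L[ℂ] H, A ∈ M → A Ω = 0 → A = 0) {A B : H →L[ℂ] H} (hA : A ∈ M)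
    (hB : B ∈ M) (hAB : A Ω = B Ω) : star A Ω = star B Ω := by
  have : A - B = 0 := hsep _ (sub_mem hA hB) (by rw [sub_apply, hAB, sub_self])
  rw [sub_eq_zero.mp this]

end VonNeumannAlgebra

theorem tomita_operator_wellDefined_conjLinear_closable_general
    {H : Type*} [NormedAddCommGroup H] [InnerProductSpace ℂ H] [CompleteSpace H]
    (M : VonNeumannAlgebra H) (Ω : H)
    (hsep : ∀ A : H →L[ℂ] H, A ∈ M → A Ω = 0 → A = 0) :
    -- well-definedness: the value `A*Ω` depends only on `AΩ`
    (∀ A B : H →L[ℂ] H, A ∈ M → B ∈ M → A Ω = B Ω → (star A) Ω = (star B) Ω) ∧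
    -- conjugate-linearity (at the level of the graph)
    (∀ A B : H →L[ℂ] H, A ∈ M → B ∈ M → (star (A + B)) Ω = (star A) Ω + (star B) Ω) ∧
    (∀ (c : ℂ) (A : H →L[ℂ] H), A ∈ M →
      (star (c • A)) Ω = (conj c) • ((star A) Ω)) ∧
    -- closability: if `AₙΩ → 0` and `Aₙ*Ω → η` then `η = 0`
    (∀ (A : ℕ → (H →L[ℂ] H)) (η : H), (∀ n, A n ∈ M) →
      Filter.Tendsto (fun n => (A n) Ω) Filter.atTop (nhds 0) →
      Filter.Tendsto (fun n => (star (A n)) Ω) Filter.atTop (nhds η) →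
      η = 0) := by
  refine ⟨fun A B hA hB ↦ VonNeumannAlgebra.star_apply_eq_of_apply_eq hsep hA hB, ?_, ?_, ?_⟩
  · intro A B _ _
    rw [star_add, add_apply]
  · intro c A _
    rw [star_smul, smul_apply, Complex.star_def]
  · intro A η hA h0 hη
    have hmem := VonNeumannAlgebra.mem_orthogonal_orbit_commutant_of_tendsto hA h0 hη
    rwa [VonNeumannAlgebra.orthogonal_orbit_commutant_eq_bot hsep, Submodule.mem_bot] at hmem

/-- The Tomita operator `S₀ : AΩ ↦ A*Ω` of a von Neumann algebra `M` with cyclic and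
separating vector `Ω` is a well-defined conjugate-linear operator and is closable. -/
theorem tomita_operator_wellDefined_conjLinear_closable
    {H : Type*} [NormedAddCommGroup H] [InnerProductSpace ℂ H] [CompleteSpace H]
    (M : VonNeumannAlgebra H) (Ω : H)
    (hcyclic : Dense {x : H | ∃ A ∈ M, A Ω = x})
    (hsep : ∀ A : H →L[ℂ] H, A ∈ M → A Ω = 0 → A = 0) :
    -- well-definedness: the value `A*Ω` depends only on `AΩ`
    (∀ A B : H →L[ℂ] H, A ∈ M → B ∈ M → A Ω = B Ω → (star A) Ω = (star B) Ω) ∧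
    -- conjugate-linearity (at the level of the graph)
    (∀ A B : H →L[ℂ] H, A ∈ M → B ∈ M → (star (A + B)) Ω = (star A) Ω + (star B) Ω) ∧
    (∀ (c : ℂ) (A : H →L[ℂ] H), A ∈ M →
      (star (c • A)) Ω = (conj c) • ((star A) Ω)) ∧
    -- closability: if `AₙΩ → 0` and `Aₙ*Ω → η` then `η = 0`
    (∀ (A : ℕ → (H →L[ℂ] H)) (η : H), (∀ n, A n ∈ M) →
      Filter.Tendsto (fun n => (A n) Ω) Filter.atTop (nhds 0) →
      Filter.Tendsto (fun n => (star (A n)) Ω) Filter.atTop (nhds η) →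
      η = 0) :=
  tomita_operator_wellDefined_conjLinear_closable_general M Ω hsep
end

section
/- (Construction of a local covariant net on the light ray ℝ from a half-sided invariant algebra.) Let M be a von Neumann algebra on a complex Hilbert space H and let (U(t))_{t∈ℝ} be a strongly continuous one-parameter group of unitaries on H such that U(t) M U(t)⁻¹ ⊆ M for all t ≥ 0. Define A(ℝ₊ + x) := U(x) M U(x)⁻¹ and A(ℝ₋ + y) := U(y) M′ U(y)⁻¹ for x, y ∈ ℝ, and for every bounded interval I = [x, y] with x < y define A(I) := A(ℝ₊ + x) ∩ A(ℝ₋ + y). Then the assignment I ↦ A(I) is: (i) isotonous — if [x, y] ⊆ [u, v] then A([x, y]) ⊆ A([u, v]); (ii) local — if [x, y] and [u, v] are disjoint intervals, then every element of A([x, y]) commutes with every element of A([u, v]); and (iii) covariant — U(z) A([x, y]) U(z)⁻¹ = A([x + z, y + z]) for all z ∈ ℝ. -/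
variable {H : Type*} [NormedAddCommGroup H] [InnerProductSpace ℂ H] [CompleteSpace H]

/-- The algebra `A(ℝ₊ + x) = U(x) M U(x)⁻¹` associated to the half-line `[x, ∞)`. -/
def halfLineAlgPlus (U : ℝ → (H →L[ℂ] H)) (M : VonNeumannAlgebra H) (x : ℝ) :
    Set (H →L[ℂ] H) :=
  (fun A => U x * A * star (U x)) '' (M : Set (H →L[ℂ] H))

/-- The algebra `A(ℝ₋ + y) = U(y) M′ U(y)⁻¹` associated to the half-line `(−∞, y]`. -/
def halfLineAlgMinus (U : ℝ → (H →L[ℂ] H)) (M : VonNeumannAlgebra H) (y : ℝ) :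
    Set (H →L[ℂ] H) :=
  (fun A => U y * A * star (U y)) '' (M.commutant : Set (H →L[ℂ] H))

/-- The algebra `A([x, y]) = A(ℝ₊ + x) ∩ A(ℝ₋ + y)` associated to the interval `[x, y]`. -/
def intervalAlg (U : ℝ → (H →L[ℂ] H)) (M : VonNeumannAlgebra H) (x y : ℝ) :
    Set (H →L[ℂ] H) :=
  halfLineAlgPlus U M x ∩ halfLineAlgMinus U M y

section Aux

variable (U : ℝ → (H →L[ℂ] H))

lemma aux_star (hunit : ∀ t : ℝ, U t ∈ unitary (H →L[ℂ] H)) (h0 : U 0 = 1)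
    (hgrp : ∀ s t : ℝ, U (s + t) = U s * U t) (t : ℝ) :
    star (U t) = U (-t) := by
  have h2 : U t * U (-t) = 1 := by rw [← hgrp]; simp [h0]
  have h3 : star (U t) * U t = 1 := (hunit t).1
  calc star (U t) = star (U t) * (U t * U (-t)) := by rw [h2, mul_one]
    _ = U (-t) := by rw [← mul_assoc, h3, one_mul]

variable (hunit : ∀ t : ℝ, U t ∈ unitary (H →L[ℂ] H)) (h0 : U 0 = 1)
    (hgrp : ∀ s t : ℝ, U (s + t) = U s * U t)

include hunit h0 hgrp

lemma aux_conj_conj (z x : ℝ) (A : H →L[ℂ] H) :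
    U z * (U x * A * star (U x)) * star (U z) = U (z + x) * A * star (U (z + x)) := by
  have e : (-x) + (-z) = -(z + x) := by ring
  rw [aux_star U hunit h0 hgrp, aux_star U hunit h0 hgrp, aux_star U hunit h0 hgrp,
    hgrp z x, ← e, hgrp (-x) (-z)]
  simp [mul_assoc]

lemma aux_conj_mul (t : ℝ) (A B : H →L[ℂ] H) :
    (U t * A * star (U t)) * (U t * B * star (U t)) = U t * (A * B) * star (U t) := by
  have h3 : star (U t) * U t = 1 := (hunit t).1
  calc (U t * A * star (U t)) * (U t * B * star (U t))
      = U t * A * (star (U t) * U t) * B * star (U t) := by simp [mul_assoc]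
    _ = U t * (A * B) * star (U t) := by rw [h3]; simp [mul_assoc]

variable (M : VonNeumannAlgebra H)
    (hinv : ∀ t : ℝ, 0 ≤ t → ∀ A : H →L[ℂ] H, A ∈ M → U t * A * star (U t) ∈ M)

include hinv

lemma aux_comm_inv (t : ℝ) (ht : 0 ≤ t) (B : H →L[ℂ] H) (hB : B ∈ M.commutant) :
    U (-t) * B * star (U (-t)) ∈ M.commutant := by
  rw [VonNeumannAlgebra.mem_commutant_iff]
  intro g hg
  have hg' : U t * g * star (U t) ∈ M := hinv t ht g hg
  have hgg : U (-t) * (U t * g * star (U t)) * star (U (-t)) = g := by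
    rw [aux_conj_conj U hunit h0 hgrp]
    simp [h0]
  have hc : (U t * g * star (U t)) * B = B * (U t * g * star (U t)) :=
    (VonNeumannAlgebra.mem_commutant_iff.mp hB) _ hg'
  calc g * (U (-t) * B * star (U (-t)))
      = (U (-t) * (U t * g * star (U t)) * star (U (-t))) * (U (-t) * B * star (U (-t))) := by
        rw [hgg]
    _ = U (-t) * ((U t * g * star (U t)) * B) * star (U (-t)) :=
        aux_conj_mul U hunit h0 hgrp (-t) _ _
    _ = U (-t) * (B * (U t * g * star (U t))) * star (U (-t)) := by rw [hc]
    _ = (U (-t) * B * star (U (-t))) * (U (-t) * (U t * g * star (U t)) * star (U (-t))) :=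
        (aux_conj_mul U hunit h0 hgrp (-t) _ _).symm
    _ = (U (-t) * B * star (U (-t))) * g := by rw [hgg]

lemma aux_plus_mono (u x : ℝ) (hux : u ≤ x) :
    halfLineAlgPlus U M x ⊆ halfLineAlgPlus U M u := by
  rintro _ ⟨A, hA, rfl⟩
  refine ⟨U (x - u) * A * star (U (x - u)), hinv _ (by linarith) A hA, ?_⟩
  show U u * (U (x - u) * A * star (U (x - u))) * star (U u) = U x * A * star (U x)
  rw [aux_conj_conj U hunit h0 hgrp]
  have e : u + (x - u) = x := by ring
  rw [e]

lemma aux_minus_mono (y v : ℝ) (hyv : y ≤ v) :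
    halfLineAlgMinus U M y ⊆ halfLineAlgMinus U M v := by
  rintro _ ⟨B, hB, rfl⟩
  refine ⟨U (-(v - y)) * B * star (U (-(v - y))),
    aux_comm_inv U hunit h0 hgrp M hinv (v - y) (by linarith) B hB, ?_⟩
  show U v * (U (-(v - y)) * B * star (U (-(v - y)))) * star (U v) = U y * B * star (U y)
  rw [aux_conj_conj U hunit h0 hgrp]
  have e : v + -(v - y) = y := by ring
  rw [e]

end Aux

/-- From a von Neumann algebra `M` and a strongly continuous one-parameter unitary
group `U` with `U(t) M U(t)⁻¹ ⊆ M` for `t ≥ 0`, the assignment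
`[x, y] ↦ A([x, y])` is an isotonous, local, covariant net on the light ray `ℝ`. -/
theorem local_net_on_lightRay
    (M : VonNeumannAlgebra H) (U : ℝ → (H →L[ℂ] H))
    (hunit : ∀ t : ℝ, U t ∈ unitary (H →L[ℂ] H))
    (h0 : U 0 = 1)
    (hgrp : ∀ s t : ℝ, U (s + t) = U s * U t)
    (hcont : ∀ ξ : H, Continuous fun t : ℝ => U t ξ)
    (hinv : ∀ t : ℝ, 0 ≤ t → ∀ A : H →L[ℂ] H, A ∈ M → U t * A * star (U t) ∈ M) :
    -- (i) isotony
    (∀ x y u v : ℝ, x < y → u ≤ x → y ≤ v →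
      intervalAlg U M x y ⊆ intervalAlg U M u v) ∧
    -- (ii) locality: disjoint intervals have commuting algebras
    (∀ x y u v : ℝ, x < y → u < v → (y < u ∨ v < x) →
      ∀ A ∈ intervalAlg U M x y, ∀ B ∈ intervalAlg U M u v, A * B = B * A) ∧
    -- (iii) covariance
    (∀ x y z : ℝ, x < y →
      (fun A => U z * A * star (U z)) '' intervalAlg U M x y =
        intervalAlg U M (x + z) (y + z)) := by
  have key_comm : ∀ t : ℝ, ∀ A ∈ halfLineAlgPlus U M t, ∀ B ∈ halfLineAlgMinus U M t,
      A * B = B * A := by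
    rintro t _ ⟨a, ha, rfl⟩ _ ⟨b, hb, rfl⟩
    rw [aux_conj_mul U hunit h0 hgrp, aux_conj_mul U hunit h0 hgrp,
      (VonNeumannAlgebra.mem_commutant_iff.mp hb) a ha]
  refine ⟨?_, ?_, ?_⟩
  · intro x y u v _ hux hyv
    exact Set.inter_subset_inter
      (aux_plus_mono U hunit h0 hgrp M hinv u x hux)
      (aux_minus_mono U hunit h0 hgrp M hinv y v hyv)
  · intro x y u v hxy huv hdisj A hA B hB
    rcases hdisj with h | h
    · exact (key_comm u B (aux_plus_mono U hunit h0 hgrp M hinv u u le_rfl hB.1)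
        A (aux_minus_mono U hunit h0 hgrp M hinv y u h.le hA.2)).symm
    · exact key_comm x A (aux_plus_mono U hunit h0 hgrp M hinv x x le_rfl hA.1)
        B (aux_minus_mono U hunit h0 hgrp M hinv v x h.le hB.2)
  · intro x y z _
    have himg : ∀ (s : Set (H →L[ℂ] H)) (w : ℝ),
        (fun A => U z * A * star (U z)) '' ((fun A => U w * A * star (U w)) '' s)
        = (fun A => U (w + z) * A * star (U (w + z))) '' s := by
      intro s w
      rw [Set.image_image]
      apply Set.image_congr
      intro a _
      rw [aux_conj_conj U hunit h0 hgrp, add_comm z w]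
    have hinj : Function.Injective (fun A : H →L[ℂ] H => U z * A * star (U z)) := by
      intro a b hab
      have := congrArg (fun X => U (-z) * X * star (U (-z))) hab
      simpa [aux_conj_conj U hunit h0 hgrp, h0] using this
    rw [intervalAlg, Set.image_inter hinj]
    unfold intervalAlg halfLineAlgPlus halfLineAlgMinus
    rw [himg, himg]
end
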